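/- Let G be a connected vertex-transitive graph with ω(G) ≥ (2/3)(Δ(G)+1), and let Q be the collection of all maximum cliques of G. Then either X_Q is edgeless, or X_Q is a cycle and G is isomorphic to the graph obtained from this cycle by replacing each vertex with a clique on ω(G)/2 vertices (blow-up of a cycle by K_{ω(G)/2}). -/

import Mathlib

open SimpleGraph

/-- A graph is vertex-transitive if its automorphism group acts transitively
on the vertices. -/
def VertexTransitive {V : Type*} (G : SimpleGraph V) : Prop :=
  ∀ u v : V, ∃ e : G ≃g G, e u = v

/-- The intersection graph `X_Q` of a collection `Q` of cliques. -/
def interGraph {V : Type*} [DecidableEq V] (Q : Set (Finset V)) :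
    SimpleGraph Q where
  Adj A B := A ≠ B ∧ ((A : Finset V) ∩ (B : Finset V)).Nonempty
  symm := by
    constructor
    rintro A B ⟨hne, h⟩
    exact ⟨hne.symm, by rwa [Finset.inter_comm]⟩
  loopless := by constructor; rintro A ⟨hne, -⟩; exact hne rfl

/-- The blow-up of a graph `H` obtained by replacing each vertex with a copy of
`K_r`, joining all vertices of copies corresponding to adjacent vertices. -/
def blowup {α : Type*} (H : SimpleGraph α) (r : ℕ) : SimpleGraph (α × Fin r) where
  Adj x y := H.Adj x.1 y.1 ∨ (x.1 = y.1 ∧ x.2 ≠ y.2)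
  symm := by
    constructor
    rintro x y (h | ⟨h1, h2⟩)
    · exact Or.inl h.symm
    · exact Or.inr ⟨h1.symm, h2.symm⟩
  loopless := by constructor; rintro x (h | ⟨-, h2⟩); exacts [H.loopless.irrefl _ h, h2 rfl]

/-!
For a vertex `v` let its kernel `κ v` be the intersection of the maximum cliques through `v`.
By Hajnal's lemma `|κ v| + |⋃ cliques through v| ≥ 2ω`, and the union lies in the closed
neighbourhood of `v`, so `|κ v| ≥ 2ω - (Δ + 1) ≥ ω / 2`. Vertex-transitivity makes the kernels
a partition of `V` into blocks of equal size. If two maximum cliques meet, every vertex lies in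
at least two of them; then every maximum clique is the union of two kernels, each kernel has
exactly `ω / 2` vertices, and the closed neighbourhood of `v`, which has at most `3ω / 2`
vertices, is `κ v` together with exactly two further kernels. So the graph on kernels, two of
them adjacent when their union is a maximum clique, is connected and 2-regular, i.e. a cycle;
`G` is its blow-up by `K_{ω/2}`, and `X_Q` is its line graph, again a cycle.
-/

open Finset Function

namespace SimpleGraph

section Cycle

variable {V W : Type*} {G : SimpleGraph V} {H : SimpleGraph W}

theorem Copy.adj_iff_of_degree_le [G.LocallyFinite] [H.LocallyFinite] (f : Copy G H)
    (hdeg : ∀ v, H.degree (f v) ≤ G.degree v) {v w : V} : H.Adj (f v) (f w) ↔ G.Adj v w := by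
  refine ⟨fun h => ?_, f.toHom.map_adj⟩
  have himage : (G.neighborFinset v).map f.toEmbedding = H.neighborFinset (f v) := by
    refine eq_of_subset_of_card_le (fun y hy => ?_) (by simpa using hdeg v)
    obtain ⟨u, hu, rfl⟩ := mem_map.mp hy
    exact (H.mem_neighborFinset _ _).mpr (f.toHom.map_adj ((G.mem_neighborFinset _ _).mp hu))
  obtain ⟨u, hu, hfu⟩ := mem_map.mp (himage ▸ (H.mem_neighborFinset _ _).mpr h)
  rwa [← f.injective hfu, ← G.mem_neighborFinset]

noncomputable def Copy.isoOfSurjective [G.LocallyFinite] [H.LocallyFinite] (f : Copy G H)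
    (hf : Surjective f) (hdeg : ∀ v, H.degree (f v) ≤ G.degree v) : G ≃g H where
  toEquiv := Equiv.ofBijective f ⟨f.injective, hf⟩
  map_rel_iff' := f.adj_iff_of_degree_le hdeg

theorem Walk.IsCycle.isHamiltonianCycle_of_mem [DecidableEq V] {v : V} {p : G.Walk v v}
    (hp : p.IsCycle) (hmem : ∀ w, w ∈ p.support) : p.IsHamiltonianCycle := by
  refine ⟨hp, hp.isPath_tail.isHamiltonian_of_mem fun w => ?_⟩
  rw [Walk.support_tail_of_not_nil _ hp.not_nil]
  rcases List.mem_cons.mp (p.cons_tail_support ▸ hmem w) with rfl | h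
  · exact Walk.end_mem_tail_support hp.not_nil
  · exact h

theorem Connected.exists_isHamiltonianCycle_of_degree_eq_two [Fintype V] [DecidableEq V]
    [DecidableRel G.Adj] (hconn : G.Connected) (hdeg : ∀ v, G.degree v = 2) :
    ∃ (v : V) (p : G.Walk v v), p.IsHamiltonianCycle := by
  obtain ⟨v⟩ := hconn.nonempty
  have hcyc : G.IsCycles := fun w _ => by
    rw [← Nat.card_coe_set_eq, Nat.card_eq_fintype_card, card_neighborSet_eq_degree, hdeg]
  have hnbr : (G.neighborSet v).Nonempty := by
    rw [← Set.nonempty_coe_sort, ← Fintype.card_pos_iff, card_neighborSet_eq_degree, hdeg]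
    exact two_pos
  obtain ⟨p, hp, hverts⟩ := hcyc.exists_cycle_toSubgraph_verts_eq_connectedComponentSupp
    (c := G.connectedComponentMk v) rfl hnbr
  refine ⟨v, p, hp.isHamiltonianCycle_of_mem fun w => ?_⟩
  rw [← Walk.mem_verts_toSubgraph, hverts, ConnectedComponent.mem_supp_iff,
    ConnectedComponent.eq]
  exact hconn.preconnected w v

theorem Connected.nonempty_iso_cycleGraph [Fintype V] [DecidableRel G.Adj]
    (hconn : G.Connected) (hdeg : ∀ v, G.degree v = 2) :
    Nonempty (G ≃g cycleGraph (Fintype.card V)) := by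
  classical
  obtain ⟨v, p, hp⟩ := hconn.exists_isHamiltonianCycle_of_degree_eq_two hdeg
  obtain ⟨m, hm⟩ : ∃ m, p.length = m + 3 := ⟨_, (Nat.sub_add_cancel hp.three_le_length).symm⟩
  rw [← hp.length_eq, hm]
  obtain ⟨f⟩ := (cycleGraph_isContained_iff (by omega)).mpr ⟨v, p, hp.isCycle, hm⟩
  have hsurj : Surjective f := ((Fintype.bijective_iff_injective_and_card f).mpr
    ⟨f.injective, by simp [← hm, hp.length_eq]⟩).2
  exact ⟨(f.isoOfSurjective hsurj fun i => by rw [hdeg, cycleGraph_degree_three_le]).symm⟩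

end Cycle

theorem cycleGraph_adj_add_one {n : ℕ} (i : Fin (n + 3)) : (cycleGraph (n + 3)).Adj i (i + 1) :=
  cycleGraph_adj.mpr (Or.inr (add_sub_cancel_left i 1))

theorem nonempty_lineGraph_cycleGraph_iso {n : ℕ} (hn : 3 ≤ n) :
    Nonempty ((cycleGraph n).lineGraph ≃g cycleGraph n) := by
  obtain ⟨n, rfl⟩ : ∃ m, n = m + 3 := ⟨n - 3, by omega⟩
  let f (i : Fin (n + 3)) : (cycleGraph (n + 3)).edgeSet := ⟨s(i, i + 1), cycleGraph_adj_add_one i⟩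
  have hne₁ (i : Fin (n + 3)) : i + 1 ≠ i := by
    rw [Ne, add_eq_left, Fin.ext_iff, Fin.val_one, Fin.val_zero]
    omega
  have hne₂ (i : Fin (n + 3)) : i + 1 + 1 ≠ i := by
    rw [Ne, add_assoc, add_eq_left, Fin.ext_iff, Fin.val_add, Fin.val_one, Fin.val_zero,
      Nat.mod_eq_of_lt (by omega)]
    omega
  have hinj : Injective f := fun i j h => by
    rcases Sym2.eq_iff.mp (congrArg Subtype.val h) with ⟨h, -⟩ | ⟨h₁, h₂⟩
    · exact h
    · exact absurd (by rw [h₂, h₁]) (hne₂ i)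
  have hsurj : Surjective f := by
    rintro ⟨e, he⟩
    induction e using Sym2.ind with
    | h u v =>
      rcases cycleGraph_adj.mp he with h | h
      · exact ⟨v, Subtype.ext (by simp [f, ← h, Sym2.eq_swap])⟩
      · exact ⟨u, Subtype.ext (by simp [f, ← h])⟩
  have hadj (i j : Fin (n + 3)) :
      (cycleGraph (n + 3)).lineGraph.Adj (f i) (f j) ↔ (cycleGraph (n + 3)).Adj i j := by
    rw [lineGraph_adj_iff_exists, hinj.ne_iff, cycleGraph_adj, sub_eq_iff_eq_add,
      sub_eq_iff_eq_add, add_comm 1 j, add_comm 1 i]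
    simp only [f, Sym2.mem_iff, exists_eq_or_imp, exists_eq_left]
    have := hne₁ i
    have := hne₁ j
    grind
  exact ⟨RelIso.symm ⟨Equiv.ofBijective f ⟨hinj, hsurj⟩, hadj _ _⟩⟩

section Partition

variable {V α : Type*}

theorem Preconnected.of_surjective {G : SimpleGraph V} {H : SimpleGraph α} (hG : G.Preconnected)
    (π : V → α) (hπ : Surjective π) (hreach : ∀ x y, G.Adj x y → H.Reachable (π x) (π y)) :
    H.Preconnected := by
  intro a b
  obtain ⟨x, rfl⟩ := hπ a
  obtain ⟨y, rfl⟩ := hπ b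
  induction (hG x y).some with
  | nil => rfl
  | cons h _ ih => exact (hreach _ _ h).trans ih

noncomputable def equivProdFinOfCardFiber [Fintype V] [DecidableEq α] {r : ℕ} (π : V → α)
    (hfib : ∀ a, Fintype.card {x // π x = a} = r) : V ≃ α × Fin r :=
  (Equiv.sigmaFiberEquiv π).symm.trans
    ((Equiv.sigmaCongrRight fun a => Fintype.equivFinOfCardEq (hfib a)).trans
      (Equiv.sigmaEquivProd α (Fin r)))

theorem nonempty_iso_blowup [Fintype V] [DecidableEq α] {G : SimpleGraph V} {H : SimpleGraph α}
    {r : ℕ} (π : V → α) (hfib : ∀ a, Fintype.card {x // π x = a} = r)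
    (hadj : ∀ x y, G.Adj x y ↔ H.Adj (π x) (π y) ∨ (π x = π y ∧ x ≠ y)) :
    Nonempty (G ≃g blowup H r) := by
  set e := equivProdFinOfCardFiber π hfib
  have hfst (z : V) : (e z).1 = π z := rfl
  refine ⟨⟨e, fun {x y} => ?_⟩⟩
  change H.Adj (e x).1 (e y).1 ∨ ((e x).1 = (e y).1 ∧ (e x).2 ≠ (e y).2) ↔ G.Adj x y
  rw [hadj, hfst, hfst, ← e.injective.ne_iff, Ne, Ne, Prod.ext_iff, hfst, hfst]
  tauto

def Iso.blowupCongr {β : Type*} {H : SimpleGraph α} {H' : SimpleGraph β} (e : H ≃g H') (r : ℕ) :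
    blowup H r ≃g blowup H' r where
  toEquiv := e.toEquiv.prodCongr (Equiv.refl _)
  map_rel_iff' := by simp [blowup, e.map_adj_iff]

theorem nonempty_lineGraph_iso_interGraph [DecidableEq V] (H : SimpleGraph α) (B : α → Finset V)
    (hB : ∀ a, (B a).Nonempty) (hdisj : Pairwise (Disjoint on B)) :
    Nonempty (H.lineGraph ≃g interGraph {s | ∃ a b, H.Adj a b ∧ s = B a ∪ B b}) := by
  let blocks : Sym2 α → Finset V := Sym2.lift ⟨fun a b => B a ∪ B b, fun _ _ => union_comm _ _⟩
  have mem_blocks {x : V} {e : Sym2 α} : x ∈ blocks e ↔ ∃ c ∈ e, x ∈ B c := by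
    induction e using Sym2.ind with
    | h a b => simp [blocks]
  have mem_iff {c : α} {e : Sym2 α} : c ∈ e ↔ (B c ∩ blocks e).Nonempty := by
    refine ⟨fun hc => ?_, fun ⟨x, hx⟩ => ?_⟩
    · obtain ⟨x, hx⟩ := hB c
      exact ⟨x, mem_inter.mpr ⟨hx, mem_blocks.mpr ⟨c, hc, hx⟩⟩⟩
    · obtain ⟨hxc, hxe⟩ := mem_inter.mp hx
      obtain ⟨d, hd, hxd⟩ := mem_blocks.mp hxe
      by_contra hc
      exact Finset.disjoint_left.mp (hdisj (ne_of_mem_of_not_mem hd hc).symm) hxc hxd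
  let f (e : H.edgeSet) : {s | ∃ a b, H.Adj a b ∧ s = B a ∪ B b} :=
    ⟨blocks e, by
      obtain ⟨e, he⟩ := e
      induction e using Sym2.ind with
      | h a b => exact ⟨a, b, he, rfl⟩⟩
  have hinj : Injective f := fun e e' h => by
    have h : blocks e = blocks e' := congrArg Subtype.val h
    exact Subtype.ext (Sym2.ext fun c => by rw [mem_iff, mem_iff, h])
  have hsurj : Surjective f := by
    rintro ⟨s, a, b, hab, rfl⟩
    exact ⟨⟨s(a, b), hab⟩, rfl⟩
  have hadj (e e' : H.edgeSet) : (interGraph _).Adj (f e) (f e') ↔ H.lineGraph.Adj e e' := by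
    rw [lineGraph_adj_iff_exists]
    refine and_congr hinj.ne_iff ⟨fun ⟨x, hx⟩ => ?_, fun ⟨c, hc, hc'⟩ => ?_⟩
    · obtain ⟨hxe, hxe'⟩ := mem_inter.mp hx
      obtain ⟨c, hc, hxc⟩ := mem_blocks.mp hxe
      exact ⟨c, hc, mem_iff.mpr ⟨x, mem_inter.mpr ⟨hxc, hxe'⟩⟩⟩
    · obtain ⟨x, hx⟩ := hB c
      exact ⟨x, mem_inter.mpr ⟨mem_blocks.mpr ⟨c, hc, hx⟩, mem_blocks.mpr ⟨c, hc', hx⟩⟩⟩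
  exact ⟨⟨Equiv.ofBijective f ⟨hinj, hsurj⟩, hadj _ _⟩⟩

end Partition

section Cliques

variable {V : Type*}

theorem Iso.isNClique_image_iff {W : Type*} [DecidableEq W] {G : SimpleGraph V}
    {H : SimpleGraph W} (e : G ≃g H) {n : ℕ} {s : Finset V} :
    H.IsNClique n (s.image e) ↔ G.IsNClique n s := by
  rw [isNClique_iff, isNClique_iff, card_image_of_injective _ e.injective, coe_image, IsClique,
    IsClique, e.injective.injOn.pairwise_image]
  have hadj : (H.Adj on e) = G.Adj := by ext; exact e.map_adj_iff
  rw [hadj]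

variable [Fintype V] [DecidableEq V] {G : SimpleGraph V}

/-- Hajnal's lemma. -/
theorem two_mul_cliqueNum_le_card_inf_add_card_sup {F : Finset (Finset V)} (hF : F.Nonempty)
    (hcl : ∀ A ∈ F, G.IsNClique G.cliqueNum A) :
    2 * G.cliqueNum ≤ #(F.inf id) + #(F.sup id) := by
  induction hF using Finset.Nonempty.cons_induction with
  | singleton A =>
    have := (hcl A (mem_singleton_self A)).card_eq
    simp only [inf_singleton, sup_singleton, id]
    omega
  | cons A F hA hF ih =>
    have hclA := hcl A (mem_cons_self A F)
    set D := F.inf id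
    set S := F.sup id
    have hDS : D ⊆ S := by
      obtain ⟨B, hB⟩ := hF
      exact (inf_le (f := id) hB).trans (le_sup (f := id) hB)
    have hcommon {x y : V} (hx : x ∈ D) (hy : y ∈ S) : ∃ B ∈ F, x ∈ B ∧ y ∈ B := by
      obtain ⟨B, hB, hyB⟩ := mem_sup.mp hy
      exact ⟨B, hB, inf_le (f := id) hB hx, hyB⟩
    have hclique : G.IsClique ((D ∪ A ∩ S : Finset V) : Set V) := by
      intro x hx y hy hxy
      simp only [coe_union, coe_inter, Set.mem_union, Set.mem_inter_iff, mem_coe] at hx hy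
      by_cases hxyA : x ∈ A ∧ y ∈ A
      · exact hclA.isClique hxyA.1 hxyA.2 hxy
      obtain ⟨B, hB, hxB, hyB⟩ : ∃ B ∈ F, x ∈ B ∧ y ∈ B := by
        rcases hx with hx | hx
        · exact hcommon hx (by rcases hy with hy | hy; exacts [hDS hy, hy.2])
        · obtain ⟨B, hB, hyB, hxB⟩ := hcommon (show y ∈ D by tauto) hx.2
          exact ⟨B, hB, hxB, hyB⟩
      exact (hcl B (mem_cons_of_mem hB)).isClique hxB hyB hxy
    have h₁ := card_union_add_card_inter D (A ∩ S)
    have h₂ := card_union_add_card_inter A S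
    rw [inter_left_comm, inter_eq_left.mpr hDS] at h₁
    have := ih fun B hB => hcl B (mem_cons_of_mem hB)
    have := hclique.card_le_cliqueNum
    have := hclA.card_eq
    rw [inf_cons, sup_cons]
    change 2 * _ ≤ #(A ∩ D) + #(A ∪ S)
    omega

theorem IsClique.subset_insert_neighborFinset [DecidableRel G.Adj] {A : Finset V}
    (hA : G.IsClique (A : Set V)) {v : V} (hv : v ∈ A) :
    A ⊆ Insert.insert v (G.neighborFinset v) := fun x hx => by
  rcases eq_or_ne v x with rfl | hvx
  · exact mem_insert_self v _
  · exact mem_insert_of_mem ((G.mem_neighborFinset v x).mpr (hA hv hx hvx))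

theorem card_insert_neighborFinset_le [DecidableRel G.Adj] (v : V) :
    #(insert v (G.neighborFinset v)) ≤ G.maxDegree + 1 :=
  (card_insert_le _ _).trans (Nat.succ_le_succ (G.degree_le_maxDegree v))

end Cliques

section Kernel

variable {V : Type*} [Fintype V] [DecidableEq V] (G : SimpleGraph V) [DecidableRel G.Adj]

noncomputable def maxCliquesAt (v : V) : Finset (Finset V) :=
  {A | G.IsNClique G.cliqueNum A ∧ v ∈ A}

/-- The kernel of `v`; it is `univ` when no maximum clique contains `v`. -/
noncomputable def cliqueKernel (v : V) : Finset V := (G.maxCliquesAt v).inf id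

variable {G}

@[simp]
theorem mem_maxCliquesAt {v : V} {A : Finset V} :
    A ∈ G.maxCliquesAt v ↔ G.IsNClique G.cliqueNum A ∧ v ∈ A := by
  simp [maxCliquesAt]

theorem mem_cliqueKernel {v x : V} : x ∈ G.cliqueKernel v ↔ ∀ A ∈ G.maxCliquesAt v, x ∈ A :=
  mem_inf

theorem cliqueKernel_subset {v : V} {A : Finset V} (hA : A ∈ G.maxCliquesAt v) :
    G.cliqueKernel v ⊆ A :=
  fun _ hx => mem_cliqueKernel.mp hx A hA

theorem mem_cliqueKernel_self (v : V) : v ∈ G.cliqueKernel v :=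
  mem_cliqueKernel.mpr fun _ hA => (mem_maxCliquesAt.mp hA).2

theorem maxCliquesAt_apply (e : G ≃g G) (v : V) :
    G.maxCliquesAt (e v) = (G.maxCliquesAt v).image (image e) := by
  ext A
  simp only [mem_image, mem_maxCliquesAt]
  constructor
  · rintro ⟨hA, hvA⟩
    refine ⟨A.image e.symm, ⟨e.symm.isNClique_image_iff.mpr hA, ?_⟩, ?_⟩
    · exact mem_image.mpr ⟨e v, hvA, e.symm_apply_apply v⟩
    · simp [image_image, comp_def]
  · rintro ⟨B, ⟨hB, hvB⟩, rfl⟩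
    exact ⟨e.isNClique_image_iff.mpr hB, mem_image_of_mem _ hvB⟩

theorem cliqueKernel_apply (e : G ≃g G) (v : V) :
    G.cliqueKernel (e v) = (G.cliqueKernel v).image e := by
  ext x
  obtain ⟨y, rfl⟩ := e.surjective x
  simp only [mem_cliqueKernel, maxCliquesAt_apply, forall_mem_image, e.injective.mem_finset_image]

theorem _root_.VertexTransitive.card_maxCliquesAt_eq (hvt : VertexTransitive G) (u v : V) :
    #(G.maxCliquesAt u) = #(G.maxCliquesAt v) := by
  obtain ⟨e, rfl⟩ := hvt u v
  rw [maxCliquesAt_apply, card_image_of_injective _ (image_injective e.injective)]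

theorem _root_.VertexTransitive.card_cliqueKernel_eq (hvt : VertexTransitive G) (u v : V) :
    #(G.cliqueKernel u) = #(G.cliqueKernel v) := by
  obtain ⟨e, rfl⟩ := hvt u v
  rw [cliqueKernel_apply, card_image_of_injective _ e.injective]

/-- A vertex `x` of `κ y` lies in every maximum clique through `y`, and in as many maximum
cliques as `y` does, so `x` and `y` lie in the same maximum cliques. -/
theorem _root_.VertexTransitive.mem_cliqueKernel_iff (hvt : VertexTransitive G) {x y : V} :
    x ∈ G.cliqueKernel y ↔ G.cliqueKernel x = G.cliqueKernel y := by
  refine ⟨fun hx => ?_, fun h => h ▸ mem_cliqueKernel_self x⟩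
  have hsub : G.maxCliquesAt y ⊆ G.maxCliquesAt x := fun A hA =>
    mem_maxCliquesAt.mpr ⟨(mem_maxCliquesAt.mp hA).1, cliqueKernel_subset hA hx⟩
  rw [cliqueKernel, cliqueKernel, eq_of_subset_of_card_le hsub (hvt.card_maxCliquesAt_eq x y).le]

theorem _root_.VertexTransitive.disjoint_cliqueKernel (hvt : VertexTransitive G) {x y : V}
    (h : G.cliqueKernel x ≠ G.cliqueKernel y) : Disjoint (G.cliqueKernel x) (G.cliqueKernel y) :=
  Finset.disjoint_left.mpr fun _ hx hy =>
    h ((hvt.mem_cliqueKernel_iff.mp hx).symm.trans (hvt.mem_cliqueKernel_iff.mp hy))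

theorem cliqueNum_le_two_mul_card_cliqueKernel (hω : 2 * (G.maxDegree + 1) ≤ 3 * G.cliqueNum)
    {v : V} (hv : (G.maxCliquesAt v).Nonempty) : G.cliqueNum ≤ 2 * #(G.cliqueKernel v) := by
  have hsup : #((G.maxCliquesAt v).sup id) ≤ G.maxDegree + 1 := by
    refine (card_le_card (Finset.sup_le fun A hA => ?_)).trans (card_insert_neighborFinset_le v)
    obtain ⟨hA, hvA⟩ := mem_maxCliquesAt.mp hA
    exact hA.isClique.subset_insert_neighborFinset hvA
  have := two_mul_cliqueNum_le_card_inf_add_card_sup hv fun A hA => (mem_maxCliquesAt.mp hA).1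
  rw [← cliqueKernel] at this
  omega

theorem not_subset_cliqueKernel {v : V} (hv : 1 < #(G.maxCliquesAt v)) {A : Finset V}
    (hA : A ∈ G.maxCliquesAt v) : ¬A ⊆ G.cliqueKernel v := fun hsub => by
  obtain ⟨B, hB, hBA⟩ := (one_lt_card_iff_nontrivial.mp hv).exists_ne A
  refine hBA (eq_of_subset_of_card_le (hsub.trans (cliqueKernel_subset hB)) ?_).symm
  rw [(mem_maxCliquesAt.mp hA).1.card_eq, (mem_maxCliquesAt.mp hB).1.card_eq]

theorem exists_cliqueKernel_ne_union_subset {v : V} (hv : 1 < #(G.maxCliquesAt v))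
    {A : Finset V} (hA : A ∈ G.maxCliquesAt v) :
    ∃ w, G.cliqueKernel v ≠ G.cliqueKernel w ∧ G.cliqueKernel v ∪ G.cliqueKernel w ⊆ A := by
  obtain ⟨w, hwA, hwv⟩ := not_subset.mp (not_subset_cliqueKernel hv hA)
  refine ⟨w, fun h => hwv (h ▸ mem_cliqueKernel_self w), union_subset (cliqueKernel_subset hA) ?_⟩
  exact cliqueKernel_subset (mem_maxCliquesAt.mpr ⟨(mem_maxCliquesAt.mp hA).1, hwA⟩)

theorem two_mul_card_cliqueKernel (hvt : VertexTransitive G)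
    (hω : 2 * (G.maxDegree + 1) ≤ 3 * G.cliqueNum) (hQ : ∀ v, 1 < #(G.maxCliquesAt v)) (v : V) :
    2 * #(G.cliqueKernel v) = G.cliqueNum := by
  have hQv : (G.maxCliquesAt v).Nonempty := card_pos.mp (zero_lt_one.trans (hQ v))
  have := cliqueNum_le_two_mul_card_cliqueKernel hω hQv
  obtain ⟨A, hA⟩ := hQv
  obtain ⟨w, hvw, hsub⟩ := exists_cliqueKernel_ne_union_subset (hQ v) hA
  have hle := card_le_card hsub
  rw [card_union_of_disjoint (hvt.disjoint_cliqueKernel hvw), (mem_maxCliquesAt.mp hA).1.card_eq,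
    hvt.card_cliqueKernel_eq w v] at hle
  omega

theorem exists_eq_cliqueKernel_union (hvt : VertexTransitive G)
    (hω : 2 * (G.maxDegree + 1) ≤ 3 * G.cliqueNum) (hQ : ∀ v, 1 < #(G.maxCliquesAt v)) {v : V}
    {A : Finset V} (hA : A ∈ G.maxCliquesAt v) :
    ∃ w, G.cliqueKernel v ≠ G.cliqueKernel w ∧ A = G.cliqueKernel v ∪ G.cliqueKernel w := by
  obtain ⟨w, hvw, hsub⟩ := exists_cliqueKernel_ne_union_subset (hQ v) hA
  refine ⟨w, hvw, (eq_of_subset_of_card_le hsub ?_).symm⟩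
  rw [card_union_of_disjoint (hvt.disjoint_cliqueKernel hvw), (mem_maxCliquesAt.mp hA).1.card_eq,
    hvt.card_cliqueKernel_eq w v, ← two_mul, two_mul_card_cliqueKernel hvt hω hQ]

variable (G) in
noncomputable def kernelGraph : SimpleGraph (Set.range G.cliqueKernel) where
  Adj K L := K ≠ L ∧ G.IsNClique G.cliqueNum (K.1 ∪ L.1)
  symm := ⟨fun K L h => ⟨h.1.symm, union_comm K.1 L.1 ▸ h.2⟩⟩
  loopless := ⟨fun _ h => h.1 rfl⟩

noncomputable instance : DecidableRel G.kernelGraph.Adj :=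
  fun _ _ => inferInstanceAs (Decidable (_ ∧ _))

variable (G) in
noncomputable abbrev kernelOf (v : V) : Set.range G.cliqueKernel :=
  Set.rangeFactorization G.cliqueKernel v

theorem kernelOf_surjective : Surjective G.kernelOf := Set.rangeFactorization_surjective

theorem kernelOf_eq_kernelOf_iff {x y : V} :
    G.kernelOf x = G.kernelOf y ↔ G.cliqueKernel x = G.cliqueKernel y :=
  Subtype.ext_iff

theorem kernelGraph_adj_kernelOf {x y : V} :
    G.kernelGraph.Adj (G.kernelOf x) (G.kernelOf y) ↔ G.cliqueKernel x ≠ G.cliqueKernel y ∧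
      G.IsNClique G.cliqueNum (G.cliqueKernel x ∪ G.cliqueKernel y) :=
  and_congr_left' kernelOf_eq_kernelOf_iff.not

theorem exists_mem_insert_neighborFinset_iff (hvt : VertexTransitive G)
    (hω : 2 * (G.maxDegree + 1) ≤ 3 * G.cliqueNum) (hQ : ∀ v, 1 < #(G.maxCliquesAt v)) (x : V) :
    ∃ a b, G.kernelGraph.Adj (G.kernelOf x) (G.kernelOf a) ∧
      G.kernelGraph.Adj (G.kernelOf x) (G.kernelOf b) ∧ G.kernelOf a ≠ G.kernelOf b ∧
      ∀ y, y ∈ insert x (G.neighborFinset x) ↔ G.kernelOf y = G.kernelOf x ∨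
        G.kernelOf y = G.kernelOf a ∨ G.kernelOf y = G.kernelOf b := by
  obtain ⟨A, hA, B, hB, hAB⟩ := one_lt_card.mp (hQ x)
  obtain ⟨a, hxa, rfl⟩ := exists_eq_cliqueKernel_union hvt hω hQ hA
  obtain ⟨b, hxb, rfl⟩ := exists_eq_cliqueKernel_union hvt hω hQ hB
  have hab : G.cliqueKernel a ≠ G.cliqueKernel b := fun h => hAB (h ▸ rfl)
  obtain ⟨hAcl, -⟩ := mem_maxCliquesAt.mp hA
  obtain ⟨hBcl, -⟩ := mem_maxCliquesAt.mp hB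
  refine ⟨a, b, kernelGraph_adj_kernelOf.mpr ⟨hxa, hAcl⟩, kernelGraph_adj_kernelOf.mpr ⟨hxb, hBcl⟩,
    kernelOf_eq_kernelOf_iff.not.mpr hab, fun y => ?_⟩
  suffices hN : insert x (G.neighborFinset x) =
      G.cliqueKernel x ∪ G.cliqueKernel a ∪ G.cliqueKernel b by
    simp only [hN, mem_union, hvt.mem_cliqueKernel_iff, kernelOf_eq_kernelOf_iff, or_assoc]
  have hxx := mem_cliqueKernel_self (G := G) x
  have hsub : G.cliqueKernel x ∪ G.cliqueKernel a ∪ G.cliqueKernel b ⊆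
      insert x (G.neighborFinset x) :=
    union_subset (hAcl.isClique.subset_insert_neighborFinset (mem_union_left _ hxx))
      (subset_union_right.trans (hBcl.isClique.subset_insert_neighborFinset (mem_union_left _ hxx)))
  -- the three disjoint kernels already fill the at most `Δ + 1 ≤ 3ω / 2` vertices of `N[x]`
  refine (eq_of_subset_of_card_le hsub ?_).symm
  rw [card_union_of_disjoint (disjoint_union_left.mpr ⟨hvt.disjoint_cliqueKernel hxb,
    hvt.disjoint_cliqueKernel hab⟩), card_union_of_disjoint (hvt.disjoint_cliqueKernel hxa),
    hvt.card_cliqueKernel_eq a x, hvt.card_cliqueKernel_eq b x]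
  have := card_insert_neighborFinset_le (G := G) x
  have := two_mul_card_cliqueKernel hvt hω hQ x
  omega

theorem adj_iff_kernelGraph_adj (hvt : VertexTransitive G)
    (hω : 2 * (G.maxDegree + 1) ≤ 3 * G.cliqueNum) (hQ : ∀ v, 1 < #(G.maxCliquesAt v)) {x y : V} :
    G.Adj x y ↔ G.kernelGraph.Adj (G.kernelOf x) (G.kernelOf y) ∨
      (G.kernelOf x = G.kernelOf y ∧ x ≠ y) := by
  constructor
  · intro h
    obtain ⟨a, b, hxa, hxb, -, hN⟩ := exists_mem_insert_neighborFinset_iff hvt hω hQ x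
    rcases (hN y).mp (mem_insert_of_mem ((G.mem_neighborFinset x y).mpr h)) with hy | hy | hy
    · exact Or.inr ⟨hy.symm, h.ne⟩
    · exact Or.inl (hy ▸ hxa)
    · exact Or.inl (hy ▸ hxb)
  · rintro (h | ⟨h, hxy⟩)
    · exact (kernelGraph_adj_kernelOf.mp h).2.isClique (mem_union_left _ (mem_cliqueKernel_self x))
        (mem_union_right _ (mem_cliqueKernel_self y)) fun hxy => h.ne (hxy ▸ rfl)
    · obtain ⟨A, hA⟩ := card_pos.mp (zero_lt_one.trans (hQ x))
      have hyx : y ∈ G.cliqueKernel x :=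
        hvt.mem_cliqueKernel_iff.mpr (kernelOf_eq_kernelOf_iff.mp h).symm
      exact (mem_maxCliquesAt.mp hA).1.isClique (mem_maxCliquesAt.mp hA).2
        (cliqueKernel_subset hA hyx) hxy

theorem kernelGraph_degree (hvt : VertexTransitive G)
    (hω : 2 * (G.maxDegree + 1) ≤ 3 * G.cliqueNum) (hQ : ∀ v, 1 < #(G.maxCliquesAt v))
    (K : Set.range G.cliqueKernel) : G.kernelGraph.degree K = 2 := by
  obtain ⟨x, rfl⟩ := kernelOf_surjective K
  obtain ⟨a, b, hxa, hxb, hab, hN⟩ := exists_mem_insert_neighborFinset_iff hvt hω hQ x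
  suffices G.kernelGraph.neighborFinset (G.kernelOf x) = {G.kernelOf a, G.kernelOf b} by
    rw [← card_neighborFinset_eq_degree, this, card_pair hab]
  ext L
  obtain ⟨y, rfl⟩ := kernelOf_surjective L
  rw [mem_neighborFinset, mem_insert, mem_singleton]
  constructor
  · intro h
    obtain ⟨hne, hcl⟩ := kernelGraph_adj_kernelOf.mp h
    have hy := hcl.isClique.subset_insert_neighborFinset
      (mem_union_left _ (mem_cliqueKernel_self x)) (mem_union_right _ (mem_cliqueKernel_self y))
    rcases (hN y).mp hy with hy | hy | hy
    · exact absurd (kernelOf_eq_kernelOf_iff.mp hy).symm hne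
    · exact Or.inl hy
    · exact Or.inr hy
  · rintro (h | h)
    · exact h ▸ hxa
    · exact h ▸ hxb

theorem kernelGraph_connected (hvt : VertexTransitive G)
    (hω : 2 * (G.maxDegree + 1) ≤ 3 * G.cliqueNum) (hQ : ∀ v, 1 < #(G.maxCliquesAt v))
    (hconn : G.Connected) : G.kernelGraph.Connected := by
  obtain ⟨v⟩ := hconn.nonempty
  refine @Connected.mk _ _ ?_ ⟨G.kernelOf v⟩
  refine hconn.preconnected.of_surjective G.kernelOf kernelOf_surjective fun x y h => ?_
  rcases (adj_iff_kernelGraph_adj hvt hω hQ).mp h with h | ⟨h, -⟩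
  · exact h.reachable
  · exact h ▸ Reachable.refl _

theorem setOf_isNClique_cliqueNum_eq [Nonempty V] (hvt : VertexTransitive G)
    (hω : 2 * (G.maxDegree + 1) ≤ 3 * G.cliqueNum) (hQ : ∀ v, 1 < #(G.maxCliquesAt v)) :
    {s | G.IsNClique G.cliqueNum s} = {s | ∃ K L, G.kernelGraph.Adj K L ∧ s = K.1 ∪ L.1} := by
  ext s
  refine ⟨fun hs => ?_, fun ⟨K, L, h, hs⟩ => hs ▸ h.2⟩
  obtain ⟨v, hv⟩ : s.Nonempty := by
    obtain ⟨u⟩ := ‹Nonempty V›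
    rw [← card_pos, hs.card_eq, ← two_mul_card_cliqueKernel hvt hω hQ u]
    exact Nat.mul_pos two_pos (card_pos.mpr ⟨u, mem_cliqueKernel_self u⟩)
  obtain ⟨w, hvw, rfl⟩ := exists_eq_cliqueKernel_union hvt hω hQ (mem_maxCliquesAt.mpr ⟨hs, hv⟩)
  exact ⟨G.kernelOf v, G.kernelOf w, kernelGraph_adj_kernelOf.mpr ⟨hvw, hs⟩, rfl⟩

theorem card_kernelOf_fiber (hvt : VertexTransitive G) (K : Set.range G.cliqueKernel) (v : V) :
    Fintype.card {x // G.kernelOf x = K} = #(G.cliqueKernel v) := by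
  obtain ⟨y, rfl⟩ := kernelOf_surjective K
  rw [Fintype.card_subtype, ← hvt.card_cliqueKernel_eq y v]
  congr 1
  ext x
  rw [mem_filter, kernelOf_eq_kernelOf_iff, hvt.mem_cliqueKernel_iff, and_iff_right (mem_univ x)]

theorem nonempty_of_mem_range_cliqueKernel (K : Set.range G.cliqueKernel) : K.1.Nonempty := by
  obtain ⟨y, rfl⟩ := kernelOf_surjective K
  exact ⟨y, mem_cliqueKernel_self y⟩

theorem _root_.VertexTransitive.pairwise_disjoint_range_cliqueKernel (hvt : VertexTransitive G) :
    Pairwise (Disjoint on (Subtype.val : Set.range G.cliqueKernel → Finset V)) := by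
  rintro ⟨_, x, rfl⟩ ⟨_, y, rfl⟩ hne
  exact hvt.disjoint_cliqueKernel fun h => hne (Subtype.ext h)

end Kernel

end SimpleGraph

/-- In a connected vertex-transitive graph with `ω ≥ (2/3)(Δ+1)`, either the
intersection graph of the maximum cliques is edgeless, or it is a cycle and `G` is
the blow-up of that cycle by `K_{ω/2}`. -/
theorem transitive_clustering_big_cliques {V : Type*} [Fintype V] [DecidableEq V]
    (G : SimpleGraph V) [DecidableRel G.Adj]
    (hconn : G.Connected) (hvt : VertexTransitive G)
    (hω : 3 * G.cliqueNum ≥ 2 * (G.maxDegree + 1)) :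
    (∀ s t : Finset V, G.IsNClique G.cliqueNum s → G.IsNClique G.cliqueNum t →
      s ≠ t → Disjoint s t) ∨
    (∃ n : ℕ, 3 ≤ n ∧ ∃ r : ℕ, 2 * r = G.cliqueNum ∧
      Nonempty (interGraph {s : Finset V | G.IsNClique G.cliqueNum s} ≃g cycleGraph n) ∧
      Nonempty (G ≃g blowup (cycleGraph n) r)) := by
  by_cases hdisj : ∀ s t : Finset V, G.IsNClique G.cliqueNum s → G.IsNClique G.cliqueNum t →
      s ≠ t → Disjoint s t
  · exact Or.inl hdisj
  right
  push Not at hdisj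
  obtain ⟨s, t, hs, ht, hst, hnd⟩ := hdisj
  obtain ⟨v₀, hv₀s, hv₀t⟩ := not_disjoint_iff.mp hnd
  have hQ (v : V) : 1 < #(G.maxCliquesAt v) := hvt.card_maxCliquesAt_eq v₀ v ▸
    one_lt_card.mpr ⟨s, mem_maxCliquesAt.mpr ⟨hs, hv₀s⟩, t, mem_maxCliquesAt.mpr ⟨ht, hv₀t⟩, hst⟩
  have : Nonempty V := ⟨v₀⟩
  have hdeg := kernelGraph_degree hvt hω hQ
  have hn : 3 ≤ Fintype.card (Set.range G.cliqueKernel) :=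
    (hdeg (G.kernelOf v₀)).symm.trans_lt (G.kernelGraph.degree_lt_card_verts _)
  obtain ⟨eC⟩ := (kernelGraph_connected hvt hω hQ hconn).nonempty_iso_cycleGraph hdeg
  obtain ⟨eL⟩ := nonempty_lineGraph_cycleGraph_iso hn
  obtain ⟨eX⟩ := nonempty_lineGraph_iso_interGraph G.kernelGraph Subtype.val
    nonempty_of_mem_range_cliqueKernel hvt.pairwise_disjoint_range_cliqueKernel
  obtain ⟨eB⟩ := nonempty_iso_blowup G.kernelOf (card_kernelOf_fiber hvt · v₀)
    fun _ _ => adj_iff_kernelGraph_adj hvt hω hQ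
  refine ⟨_, hn, _, two_mul_card_cliqueKernel hvt hω hQ v₀, ?_, ⟨eB.trans (eC.blowupCongr _)⟩⟩
  rw [setOf_isNClique_cliqueNum_eq hvt hω hQ]
  exact ⟨eX.symm.trans (eC.lineGraph.trans eL)⟩
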